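/- Let M be a unital *-subalgebra of the bounded operators on a Hilbert space H. Then M equals its double commutant M'' if and only if M is closed in the weak operator topology. -/

import Mathlib

/-!
Commutants are WOT-closed because multiplication is separately WOT-continuous; this gives one
direction. Conversely let `T ∈ M''` and `ξ ∈ H`. The closure of `M ξ` is invariant under the
*-closed algebra `M`, so its orthogonal projection lies in `M'` and commutes with `T`; as it
contains `ξ = 1 ξ`, it contains `T ξ`. Running this argument for the amplification of `M` on the
Hilbert sum `H ⊕ ⋯ ⊕ H` approximates `T` by elements of `M` at finitely many vectors at once,
which places `T` in the WOT closure of `M`.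
-/

open Set

section
variable {𝕜 E : Type*} [NontriviallyNormedField 𝕜] [NormedAddCommGroup E] [NormedSpace 𝕜 E]

lemma ContinuousLinearMapWOT.ofCLM_image_centralizer (S : Set (E →L[𝕜] E)) :
    ofCLM '' centralizer S = centralizer (ofCLM '' S : Set (E →WOT[𝕜] E)) := by
  ext A
  obtain ⟨A, rfl⟩ := ofCLM_surjective A
  simp [mem_centralizer_iff, ofCLM_surjective.forall, ofCLM_injective.eq_iff]

lemma ContinuousLinearMapWOT.isClosed_ofCLM_image_centralizer [SeparatingDual 𝕜 E]
    (S : Set (E →L[𝕜] E)) : IsClosed (ofCLM '' centralizer S : Set (E →WOT[𝕜] E)) :=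
  ofCLM_image_centralizer S ▸ isClosed_centralizer _

end

section
variable {𝕜 E : Type*} [RCLike 𝕜] [NormedAddCommGroup E] [InnerProductSpace 𝕜 E] [CompleteSpace E]

open ContinuousLinearMap Module.End

lemma Submodule.commute_starProjection (K : Submodule 𝕜 E) [K.HasOrthogonalProjection]
    {T : E →L[𝕜] E} (hT : K ∈ invtSubmodule (T : E →ₗ[𝕜] E))
    (hT' : K ∈ invtSubmodule (adjoint T : E →ₗ[𝕜] E)) : Commute K.starProjection T :=
  K.isIdempotentElem_starProjection.commute_iff.2
    ⟨by rwa [K.range_starProjection],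
      by rw [K.ker_starProjection]; exact orthogonal_mem_invtSubmodule hT'⟩

lemma apply_mem_closure_image_of_mem_centralizer_centralizer
    (A : StarSubalgebra 𝕜 (E →L[𝕜] E)) {T : E →L[𝕜] E}
    (hT : T ∈ centralizer (centralizer (A : Set (E →L[𝕜] E)))) (ξ : E) :
    T ξ ∈ closure ((fun a : E →L[𝕜] E => a ξ) '' A) := by
  set K := (A.toSubalgebra.toSubmodule.map (apply 𝕜 E ξ : (E →L[𝕜] E) →ₗ[𝕜] E)).topologicalClosure
  have hK : (K : Set E) = closure ((fun a : E →L[𝕜] E => a ξ) '' A) :=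
    Submodule.topologicalClosure_coe _
  have : CompleteSpace K := (Submodule.isClosed_topologicalClosure _).completeSpace_coe
  have hinv : ∀ a ∈ A, K ∈ invtSubmodule (a : E →ₗ[𝕜] E) := by
    intro a ha
    rw [mem_invtSubmodule_iff_forall_mem_of_mem]
    intro v hv
    rw [← SetLike.mem_coe, hK] at hv ⊢
    refine MapsTo.closure ?_ a.continuous hv
    rintro _ ⟨b, hb, rfl⟩
    exact ⟨a * b, A.mul_mem ha hb, rfl⟩
  have hP : K.starProjection ∈ centralizer (A : Set (E →L[𝕜] E)) := fun a ha =>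
    (K.commute_starProjection (hinv a ha) (hinv _ (star_eq_adjoint a ▸ star_mem ha))).eq.symm
  have hξ : ξ ∈ K := by
    rw [← SetLike.mem_coe, hK]
    exact subset_closure ⟨1, A.one_mem, rfl⟩
  have hTξ : K.starProjection (T ξ) = T ξ := by
    have h := congr($(hT _ hP) ξ)
    rwa [mul_apply_eq_comp, mul_apply_eq_comp, K.starProjection_eq_self_iff.2 hξ] at h
  rw [← hK, ← hTξ]
  exact K.starProjection_apply_mem _

variable (𝕜 E) (ι : Type*) [Fintype ι]

noncomputable def amplification :
    (E →L[𝕜] E) →⋆ₐ[𝕜] (PiLp 2 (fun _ : ι => E) →L[𝕜] PiLp 2 (fun _ : ι => E)) where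
  toFun a := (PiLp.continuousLinearEquiv 2 𝕜 _).symm.toContinuousLinearMap ∘L
    piMap (fun _ => a) ∘L (PiLp.continuousLinearEquiv 2 𝕜 _).toContinuousLinearMap
  map_one' := rfl
  map_mul' _ _ := rfl
  map_zero' := rfl
  map_add' _ _ := rfl
  commutes' c := by ext; simp [Algebra.algebraMap_eq_smul_one]
  map_star' a := by
    simp only [star_eq_adjoint]
    rw [eq_adjoint_iff]
    intro x y
    simp [PiLp.inner_apply, adjoint_inner_left]

variable {𝕜 E ι}

@[simp]
lemma amplification_apply (a : E →L[𝕜] E) (x : PiLp 2 (fun _ : ι => E)) (i : ι) :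
    amplification 𝕜 E ι a x i = a (x i) := rfl

lemma amplification_mem_centralizer_centralizer {S : Set (E →L[𝕜] E)} {T : E →L[𝕜] E}
    (hT : T ∈ centralizer (centralizer S)) :
    amplification 𝕜 E ι T ∈ centralizer (centralizer (amplification 𝕜 E ι '' S)) := by
  classical
  intro R hR
  -- The matrix entries of an operator commuting with the amplification of `S` lie in `S'`.
  let single (j : ι) : E →L[𝕜] PiLp 2 (fun _ : ι => E) :=
    (PiLp.continuousLinearEquiv 2 𝕜 _).symm.toContinuousLinearMap ∘L
      ContinuousLinearMap.single 𝕜 (fun _ => E) j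
  let entry (i j : ι) : E →L[𝕜] E := PiLp.proj 2 (fun _ => E) i ∘L R ∘L single j
  have amplification_single (a : E →L[𝕜] E) (j : ι) (v : E) :
      amplification 𝕜 E ι a (single j v) = single j (a v) := by
    ext i
    by_cases h : i = j
    · subst h; simp [single]
    · simp [single, h]
  have entry_mem (i j : ι) : entry i j ∈ centralizer S := by
    intro s hs
    ext v
    simpa [entry, amplification_single] using congr($(hR _ ⟨s, hs, rfl⟩) (single j v) i)
  have R_apply (y : PiLp 2 (fun _ : ι => E)) (i : ι) : R y i = ∑ j, entry i j (y j) := by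
    conv_lhs => rw [show y = ∑ j, single j (y j) by ext; simp [single]]
    simp [entry]
  ext x i
  simp only [mul_apply_eq_comp, amplification_apply, R_apply, map_sum]
  refine Finset.sum_congr rfl fun j _ => ?_
  simpa only [mul_apply_eq_comp] using congr($(hT _ (entry_mem i j)) (x j))

lemma pi_apply_mem_closure_image_of_mem_centralizer_centralizer
    (A : StarSubalgebra 𝕜 (E →L[𝕜] E)) {T : E →L[𝕜] E}
    (hT : T ∈ centralizer (centralizer (A : Set (E →L[𝕜] E)))) (x : ι → E) :
    (fun i => T (x i)) ∈ closure ((fun (a : E →L[𝕜] E) i => a (x i)) '' A) := by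
  have hT' := amplification_mem_centralizer_centralizer (ι := ι) hT
  rw [← StarSubalgebra.coe_map] at hT'
  refine map_mem_closure (PiLp.continuous_ofLp 2 _)
    (apply_mem_closure_image_of_mem_centralizer_centralizer _ hT' (WithLp.toLp 2 x)) ?_
  rintro _ ⟨_, ⟨a, ha, rfl⟩, rfl⟩
  exact ⟨a, ha, rfl⟩

lemma ContinuousLinearMapWOT.ofCLM_mem_closure_image_of_mem_centralizer_centralizer
    (A : StarSubalgebra 𝕜 (E →L[𝕜] E)) {T : E →L[𝕜] E}
    (hT : T ∈ centralizer (centralizer (A : Set (E →L[𝕜] E)))) :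
    ofCLM T ∈ closure (ofCLM '' A : Set (E →WOT[𝕜] E)) := by
  rw [mem_closure_iff_nhds_basis withSeminorms.hasBasis_ball]
  rintro ⟨s, r⟩ (hr : 0 < r)
  let O : Set (s → E) := {v | ∀ q : s, ‖q.1.2 (v q - T q.1.1)‖ < r}
  have hO : IsOpen O := by
    simp only [O, ofPred_forall]
    exact isOpen_iInter_of_finite fun q => isOpen_lt (by fun_prop) continuous_const
  obtain ⟨_, hvO, a, ha, rfl⟩ := mem_closure_iff.1
    (pi_apply_mem_closure_image_of_mem_centralizer_centralizer A hT fun q : s => q.1.1) O hO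
    fun _ => by simpa using hr
  refine ⟨ofCLM a, ⟨a, ha, rfl⟩, ?_⟩
  rw [Seminorm.mem_ball]
  exact Seminorm.finset_sup_apply_lt hr fun q hq => hvO ⟨q, hq⟩

end

/-- von Neumann's bicommutant theorem: a unital *-subalgebra `M` of the bounded operators
on a Hilbert space `H` equals its double commutant `M''` if and only if `M` is closed in
the weak operator topology. -/
theorem stmt3 {H : Type*} [NormedAddCommGroup H] [InnerProductSpace ℂ H] [CompleteSpace H]
    (M : StarSubalgebra ℂ (H →L[ℂ] H)) :
    Set.centralizer (Set.centralizer (M : Set (H →L[ℂ] H))) = (M : Set (H →L[ℂ] H)) ↔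
      IsClosed ((ContinuousLinearMapWOT.ofCLM : (H →L[ℂ] H) → (H →WOT[ℂ] H)) '' (M : Set (H →L[ℂ] H))) := by
  refine ⟨fun h => h ▸ ContinuousLinearMapWOT.isClosed_ofCLM_image_centralizer _, fun hM => ?_⟩
  refine (Set.subset_centralizer_centralizer).antisymm' fun T hT => ?_
  obtain ⟨a, ha, hAT⟩ := hM.closure_eq ▸
    ContinuousLinearMapWOT.ofCLM_mem_closure_image_of_mem_centralizer_centralizer M hT
  exact ContinuousLinearMapWOT.ofCLM_injective hAT ▸ ha
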